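/- arXiv:1510.03227 — 6 statements merged into one kernel-verified Lean document; each statement's English description precedes it below -/
import Mathlib

section
/- Let A1 and A2 be matrices in Z^{2×2} such that A1 is nonzero and, for every t ∈ Z, the matrix t·A1 + A2 belongs to SL(2,Z). Then there exist matrices B and C in SL(2,Z) and an integer k such that t·A1 + A2 = B·T^{k t}·C for every t ∈ Z, where T is the matrix with rows (1,1) and (0,1). -/
open Matrix MatrixGroups

/-!
Since `det A2 = 1`, put `C := A2 ∈ SL(2,ℤ)` and `N := A1 C⁻¹`, so that
`t A1 + A2 = (t N + 1) C`. As `det (t N + 1) = t² det N + t tr N + 1` equals `1` for all `t`,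
both `det N` and `tr N` vanish. An integer matrix of determinant zero kills a primitive vector
`v`; completing `v` to a matrix `B ∈ SL(2,ℤ)` with first column `v`, the conjugate `B⁻¹ N B`
has zero first column and zero trace, hence equals `!![0, k; 0, 0]`, and then
`t N + 1 = B T^(kt) B⁻¹`.
-/

namespace Matrix

lemma det_fin_two_smul_add_one {R : Type*} [CommRing R] (M : Matrix (Fin 2) (Fin 2) R) (t : R) :
    (t • M + 1).det = t ^ 2 * M.det + t * M.trace + 1 := by
  simp only [det_fin_two, trace_fin_two, add_apply, smul_apply, smul_eq_mul, one_apply_eq,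
    one_apply_ne, ne_eq, one_ne_zero, zero_ne_one, not_false_eq_true, add_zero]
  ring

lemma det_eq_zero_and_trace_eq_zero_of_det_smul_add_one {R : Type*} [CommRing R] [IsDomain R]
    [CharZero R] {M : Matrix (Fin 2) (Fin 2) R} (h : ∀ t : R, (t • M + 1).det = 1) :
    M.det = 0 ∧ M.trace = 0 := by
  have h1 := h 1
  have h2 := h (-1)
  rw [det_fin_two_smul_add_one] at h1 h2
  have h2det : 2 * M.det = 0 := by linear_combination h1 + h2
  have h2tr : 2 * M.trace = 0 := by linear_combination h1 - h2
  exact ⟨(mul_eq_zero.mp h2det).resolve_left two_ne_zero,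
    (mul_eq_zero.mp h2tr).resolve_left two_ne_zero⟩

lemma exists_isCoprime_mulVec_eq_zero_of_det_eq_zero {N : Matrix (Fin 2) (Fin 2) ℤ}
    (h : N.det = 0) : ∃ v : Fin 2 → ℤ, IsCoprime (v 0) (v 1) ∧ N *ᵥ v = 0 := by
  obtain ⟨w, hw0, hw⟩ := exists_mulVec_eq_zero_iff.mpr h
  have hgcd : 0 < Int.gcd (w 0) (w 1) := by
    refine Int.gcd_pos_iff.mpr ?_
    by_contra! hz
    exact hw0 (funext fun i => by fin_cases i <;> simp [hz])
  obtain ⟨g, p, q, hg, hpq, hp, hq⟩ := Int.exists_gcd_one' hgcd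
  have hw_eq : w = (g : ℤ) • ![p, q] := by
    ext i; fin_cases i <;> simp [hp, hq, mul_comm]
  refine ⟨![p, q], Int.isCoprime_iff_gcd_eq_one.mpr hpq, ?_⟩
  rw [hw_eq, mulVec_smul] at hw
  exact (smul_eq_zero.mp hw).resolve_left (by exact_mod_cast hg.ne')

lemma SpecialLinearGroup.exists_col_zero_eq_of_isCoprime {R : Type*} [CommRing R]
    {v : Fin 2 → R} (hv : IsCoprime (v 0) (v 1)) :
    ∃ B : SL(2, R), (B : Matrix (Fin 2) (Fin 2) R).col 0 = v := by
  obtain ⟨a, b, hab⟩ := hv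
  refine ⟨⟨!![v 0, -b; v 1, a], by rw [det_fin_two_of]; linear_combination hab⟩, ?_⟩
  ext i; fin_cases i <;> rfl

lemma exists_SL2_conj_eq_of_det_eq_zero_of_trace_eq_zero {N : Matrix (Fin 2) (Fin 2) ℤ}
    (hdet : N.det = 0) (htr : N.trace = 0) :
    ∃ (B : SL(2, ℤ)) (k : ℤ),
      N = B * !![0, k; 0, 0] * ((B⁻¹ : SL(2, ℤ)) : Matrix (Fin 2) (Fin 2) ℤ) := by
  obtain ⟨v, hv, hNv⟩ := exists_isCoprime_mulVec_eq_zero_of_det_eq_zero hdet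
  obtain ⟨B, hB⟩ := SpecialLinearGroup.exists_col_zero_eq_of_isCoprime hv
  have hBB :
      (B : Matrix (Fin 2) (Fin 2) ℤ) * ((B⁻¹ : SL(2, ℤ)) : Matrix (Fin 2) (Fin 2) ℤ) = 1 :=
    congrArg Subtype.val (mul_inv_cancel B)
  set M : Matrix (Fin 2) (Fin 2) ℤ := ((B⁻¹ : SL(2, ℤ)) : Matrix (Fin 2) (Fin 2) ℤ) * N * B
    with hM
  have hcol : M.col 0 = 0 := by
    rw [← mulVec_single_one, hM, ← mulVec_mulVec, mulVec_single_one, hB, ← mulVec_mulVec, hNv,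
      mulVec_zero]
  have hMtr : M 0 0 + M 1 1 = 0 := by
    rw [← trace_fin_two, hM, trace_mul_cycle, hBB, one_mul, htr]
  have hM_eq : M = !![0, M 0 1; 0, 0] := by
    have h00 : M 0 0 = 0 := congrFun hcol 0
    have h10 : M 1 0 = 0 := congrFun hcol 1
    conv_lhs => rw [eta_fin_two M]
    rw [h00, h10, show M 1 1 = 0 by linarith]
  refine ⟨B, M 0 1, ?_⟩
  rw [← hM_eq, hM, ← mul_assoc, ← mul_assoc, hBB, one_mul, mul_assoc, hBB, mul_one]

end Matrix

lemma ModularGroup.coe_T_zpow_mul (k t : ℤ) :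
    ((ModularGroup.T ^ (k * t) : SL(2, ℤ)) : Matrix (Fin 2) (Fin 2) ℤ) =
      t • !![0, k; 0, 0] + 1 := by
  rw [ModularGroup.coe_T_zpow]
  ext i j; fin_cases i <;> fin_cases j <;> simp [mul_comm]

theorem linear_family_eq_BTktC_general (A1 A2 : Matrix (Fin 2) (Fin 2) ℤ)
    (h : ∀ t : ℤ, (t • A1 + A2).det = 1) :
    ∃ (B C : SL(2, ℤ)) (k : ℤ), ∀ t : ℤ,
      t • A1 + A2 = ((B * ModularGroup.T ^ (k * t) * C : SL(2, ℤ)) :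
        Matrix (Fin 2) (Fin 2) ℤ) := by
  let C : SL(2, ℤ) := ⟨A2, by simpa using h 0⟩
  set N := A1 * ((C⁻¹ : SL(2, ℤ)) : Matrix (Fin 2) (Fin 2) ℤ)
  have hfactor : ∀ t : ℤ, t • A1 + A2 = (t • N + 1) * C := fun t => by
    rw [add_mul, smul_mul_assoc, mul_assoc, ← Matrix.SpecialLinearGroup.coe_mul, inv_mul_cancel,
      Matrix.SpecialLinearGroup.coe_one, mul_one, one_mul]
  have hdetN : ∀ t : ℤ, (t • N + 1).det = 1 := fun t => by
    simpa only [hfactor t, det_mul, Matrix.SpecialLinearGroup.det_coe, mul_one] using h t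
  obtain ⟨hdet, htr⟩ := det_eq_zero_and_trace_eq_zero_of_det_smul_add_one hdetN
  obtain ⟨B, k, hN⟩ := exists_SL2_conj_eq_of_det_eq_zero_of_trace_eq_zero hdet htr
  refine ⟨B, B⁻¹ * C, k, fun t => ?_⟩
  rw [hfactor t, hN, Matrix.SpecialLinearGroup.coe_mul, Matrix.SpecialLinearGroup.coe_mul,
    Matrix.SpecialLinearGroup.coe_mul, ModularGroup.coe_T_zpow_mul]
  simp only [add_mul, mul_add, mul_one, one_mul, Matrix.mul_smul, Matrix.smul_mul, mul_assoc,
    ← Matrix.SpecialLinearGroup.coe_mul, mul_inv_cancel_left]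

/-- If `A1 ≠ 0` and `t • A1 + A2 ∈ SL(2,ℤ)` for all integers `t`, then
`t • A1 + A2 = B * T^(k*t) * C` for some `B, C ∈ SL(2,ℤ)` and `k ∈ ℤ`,
where `T = !![1,1; 0,1]`. -/
theorem linear_family_eq_BTktC (A1 A2 : Matrix (Fin 2) (Fin 2) ℤ) (hA1 : A1 ≠ 0)
    (h : ∀ t : ℤ, (t • A1 + A2).det = 1) :
    ∃ (B C : SL(2, ℤ)) (k : ℤ), ∀ t : ℤ,
      t • A1 + A2 = ((B * ModularGroup.T ^ (k * t) * C : SL(2, ℤ)) :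
        Matrix (Fin 2) (Fin 2) ℤ) :=
  linear_family_eq_BTktC_general A1 A2 h
end

section
/- Let x = (x1, x2) and y = (y1, y2) be vectors in Z × Z with x not equal to the zero vector, and consider the matrix equation M x = y with unknown M in SL(2,Z). Then either this equation has no solution, or there exist matrices B and C in SL(2,Z) and an integer k such that the set of solutions is exactly { B·T^{k t}·C : t ∈ Z }, where T is the matrix with rows (1,1) and (0,1). -/
/-!
The solutions of `M x = y` form the left coset `M₀ · Stab(x)` of any one solution `M₀`.
A nonzero `x ∈ ℤ²` is `g • A e₁` with `g ≠ 0` and `A ∈ SL(2, ℤ)` (its first column being the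
primitive vector `x / gcd(x₁, x₂)`), so `Stab(x) = Stab(A e₁) = A ⟨T⟩ A⁻¹`, as the stabilizer
of `e₁` consists of the matrices `!![1, t; 0, 1]`. Hence the solutions are `M₀ A T^t A⁻¹`.
-/

open Matrix MatrixGroups

namespace MulAction

variable {G α β : Type*} [Group G] [MulAction G β]

lemma smul_eq_smul_iff_inv_mul_mem_stabilizer {g₀ g : G} {b : β} :
    g • b = g₀ • b ↔ g₀⁻¹ * g ∈ stabilizer G b := by
  rw [mem_stabilizer_iff, mul_smul, inv_smul_eq_iff]

lemma stabilizer_smul_eq_of_injective [SMul α β] [SMulCommClass G α β] {a : α}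
    (ha : Function.Injective (a • · : β → β)) (b : β) :
    stabilizer G (a • b) = stabilizer G b := by
  refine le_antisymm (fun g hg => ?_) (le_stabilizer_smul_right a b)
  rw [mem_stabilizer_iff, smul_comm] at hg
  exact ha hg

end MulAction

namespace ModularGroup

open MulAction

lemma stabilizer_vec_one_zero :
    stabilizer SL(2, ℤ) (![1, 0] : Fin 2 → ℤ) = Subgroup.zpowers T := by
  ext N
  rw [mem_stabilizer_iff, Subgroup.mem_zpowers_iff, Matrix.SpecialLinearGroup.smul_def,
    smul_eq_mulVec]
  constructor
  · intro h
    have hN00 := congrFun h 0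
    have hN10 := congrFun h 1
    simp only [mulVec, dotProduct, Fin.sum_univ_two] at hN00 hN10
    have hdet := N.property
    rw [det_fin_two] at hdet
    refine ⟨N 0 1, ?_⟩
    ext i j
    rw [coe_T_zpow]
    fin_cases i <;> fin_cases j <;> simp_all
  · rintro ⟨t, rfl⟩
    ext i
    fin_cases i <;> simp [coe_T_zpow]

lemma exists_smul_vec_one_zero_eq {a b : ℤ} (hab : IsCoprime a b) :
    ∃ A : SL(2, ℤ), A • (![1, 0] : Fin 2 → ℤ) = ![a, b] := by
  obtain ⟨u, v, huv⟩ := hab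
  refine ⟨⟨!![a, -v; b, u], by rw [det_fin_two_of]; linarith⟩, ?_⟩
  change !![a, -v; b, u] *ᵥ ![1, 0] = ![a, b]
  ext i
  fin_cases i <;> simp

lemma exists_eq_smul_smul_vec_one_zero {v : Fin 2 → ℤ} (hv : v ≠ 0) :
    ∃ (g : ℤ) (A : SL(2, ℤ)), g ≠ 0 ∧ v = g • A • (![1, 0] : Fin 2 → ℤ) := by
  have hgcd : 0 < Int.gcd (v 0) (v 1) := by
    refine Int.gcd_pos_iff.mpr (not_and_or.mp fun h => hv ?_)
    ext i
    fin_cases i <;> simp [h.1, h.2]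
  obtain ⟨a, b, hab, ha, hb⟩ := Int.exists_gcd_one hgcd
  obtain ⟨A, hA⟩ := exists_smul_vec_one_zero_eq (Int.isCoprime_iff_gcd_eq_one.mpr hab)
  refine ⟨Int.gcd (v 0) (v 1), A, by positivity, ?_⟩
  rw [hA]
  ext i
  fin_cases i
  · simpa using ha.trans (mul_comm _ _)
  · simpa using hb.trans (mul_comm _ _)

lemma exists_stabilizer_eq_map_conj_zpowers_T {v : Fin 2 → ℤ} (hv : v ≠ 0) :
    ∃ A : SL(2, ℤ),
      stabilizer SL(2, ℤ) v = (Subgroup.zpowers T).map (MulAut.conj A).toMonoidHom := by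
  obtain ⟨g, A, hg, rfl⟩ := exists_eq_smul_smul_vec_one_zero hv
  refine ⟨A, ?_⟩
  rw [stabilizer_smul_eq_of_injective (smul_right_injective _ hg),
    stabilizer_smul_eq_stabilizer_map_conj, stabilizer_vec_one_zero]

end ModularGroup

/-- For `x ≠ 0`, the solution set of `M x = y` over `M ∈ SL(2,ℤ)` is either empty
or equal to `{ B * T^(k*t) * C : t ∈ ℤ }` for some `B, C ∈ SL(2,ℤ)` and `k ∈ ℤ`,
where `T = !![1,1; 0,1]`. -/
theorem solutions_eq_BTktC (x1 x2 y1 y2 : ℤ) (hx : ¬(x1 = 0 ∧ x2 = 0)) :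
    (¬ ∃ M : SL(2, ℤ), (M : Matrix (Fin 2) (Fin 2) ℤ).mulVec ![x1, x2] = ![y1, y2]) ∨
    ∃ (B C : SL(2, ℤ)) (k : ℤ),
      {M : SL(2, ℤ) | (M : Matrix (Fin 2) (Fin 2) ℤ).mulVec ![x1, x2] = ![y1, y2]} =
        {M : SL(2, ℤ) | ∃ t : ℤ, M = B * ModularGroup.T ^ (k * t) * C} := by
  refine or_iff_not_imp_left.mpr fun hsol => ?_
  obtain ⟨M₀, hM₀⟩ := not_not.mp hsol
  have hx0 : ![x1, x2] ≠ 0 := fun h => hx ⟨congrFun h 0, congrFun h 1⟩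
  obtain ⟨A, hA⟩ := ModularGroup.exists_stabilizer_eq_map_conj_zpowers_T hx0
  refine ⟨M₀ * A, A⁻¹, 1, Set.ext fun M => ?_⟩
  change M • ![x1, x2] = ![y1, y2] ↔ _
  change M₀ • ![x1, x2] = ![y1, y2] at hM₀
  rw [← hM₀, MulAction.smul_eq_smul_iff_inv_mul_mem_stabilizer, hA, Subgroup.mem_map_equiv,
    MulAut.conj_symm_apply, Subgroup.mem_zpowers_iff]
  simp only [Set.mem_ofPred_eq, one_mul]
  refine exists_congr fun t => ⟨fun h => ?_, fun h => ?_⟩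
  · rw [h]; group
  · rw [h]; group
end

section
/- Let x = (x1, x2) and y = (y1, y2) be vectors in Z × Z with x not equal to the zero vector. If the matrix equation M x = y has a solution M in SL(2,Z), then there exist matrices B and C in SL(2,Z) such that the set of all solutions is exactly { B·T^{t}·C : t ∈ Z }, where T is the matrix with rows (1,1) and (0,1). -/
/-!
Write `g = gcd(x1, x2) ≠ 0`. Bézout gives `A ∈ SL(2,ℤ)` with `A x = (g, 0)`, and a matrix of
determinant one fixing `(g, 0)` has first column `(1, 0)`, hence is a power of `T`. So the
stabilizer of `x` is `A⁻¹ ⟨T⟩ A`, and the solutions of `M x = y` form the coset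
`M₀ A⁻¹ ⟨T⟩ A` of any one solution `M₀`.
-/

open Matrix MatrixGroups

theorem MulAction.setOf_smul_eq_eq_of_stabilizer_eq_zpowers {G α : Type*} [Group G]
    [MulAction G α] {x y : α} {M₀ A T : G} (h₀ : M₀ • x = y)
    (hT : stabilizer G (A • x) = Subgroup.zpowers T) :
    {M : G | M • x = y} = {M | ∃ t : ℤ, M = M₀ * A⁻¹ * T ^ t * A} := by
  ext M
  have hstab : M • x = y ↔ A * M₀⁻¹ * M * A⁻¹ ∈ stabilizer G (A • x) := by
    rw [mem_stabilizer_iff, ← h₀]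
    simp [mul_smul, inv_smul_eq_iff]
  rw [Set.mem_ofPred_eq, hstab, hT, Subgroup.mem_zpowers_iff]
  refine exists_congr fun t => ⟨fun h => ?_, fun h => ?_⟩ <;> rw [h] <;> group

theorem Matrix.SpecialLinearGroup.exists_smul_eq_vecCons_one_zero {R : Type*} [CommRing R]
    {a b : R} (h : IsCoprime a b) : ∃ A : SL(2, R), A • ![a, b] = ![1, 0] := by
  obtain ⟨u, w, huw⟩ := h
  refine ⟨⟨!![u, w; -b, a], by simp [det_fin_two, ← huw]⟩, ?_⟩
  change !![u, w; -b, a] *ᵥ ![a, b] = ![1, 0]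
  ext i
  fin_cases i
  · simpa [mul_comm] using huw
  · simp [mul_comm]

theorem Int.exists_SL2_smul_eq_gcd (x1 x2 : ℤ) :
    ∃ A : SL(2, ℤ), A • ![x1, x2] = ![((x1.gcd x2 : ℕ) : ℤ), 0] := by
  set g : ℤ := ((x1.gcd x2 : ℕ) : ℤ)
  rcases eq_or_ne g 0 with hg | hg
  · obtain ⟨rfl, rfl⟩ := Int.gcd_eq_zero_iff.mp (Int.ofNat_eq_zero.mp hg)
    exact ⟨1, by simp [g]⟩
  have hcop : IsCoprime (x1 / g) (x2 / g) :=
    Int.isCoprime_iff_gcd_eq_one.mpr (Int.gcd_div_gcd_div_gcd (Int.natCast_pos.mp (by omega)))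
  obtain ⟨A, hA⟩ := Matrix.SpecialLinearGroup.exists_smul_eq_vecCons_one_zero hcop
  have hx : ![x1, x2] = g • ![x1 / g, x2 / g] := by
    ext i
    fin_cases i <;>
      simp [g, Int.mul_ediv_cancel' (Int.gcd_dvd_left x1 x2),
        Int.mul_ediv_cancel' (Int.gcd_dvd_right x1 x2)]
  refine ⟨A, ?_⟩
  rw [hx, smul_comm, hA]
  ext i
  fin_cases i <;> simp

theorem ModularGroup.stabilizer_vecCons_zero {g : ℤ} (hg : g ≠ 0) :
    MulAction.stabilizer SL(2, ℤ) ![g, 0] = Subgroup.zpowers T := by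
  ext N
  rw [MulAction.mem_stabilizer_iff, Subgroup.mem_zpowers_iff,
    Matrix.SpecialLinearGroup.smul_def, smul_eq_mulVec]
  constructor
  · intro h
    have h00 : (N : Matrix (Fin 2) (Fin 2) ℤ) 0 0 = 1 := by simpa [hg] using congrFun h 0
    have h10 : (N : Matrix (Fin 2) (Fin 2) ℤ) 1 0 = 0 := by simpa [hg] using congrFun h 1
    have h11 : (N : Matrix (Fin 2) (Fin 2) ℤ) 1 1 = 1 := by
      have hdet := N.det_coe
      rw [det_fin_two, h00, h10] at hdet
      linarith
    refine ⟨N 0 1, ?_⟩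
    ext i j
    fin_cases i <;> fin_cases j <;> simp [coe_T_zpow, h00, h10, h11]
  · rintro ⟨t, rfl⟩
    ext i
    fin_cases i <;> simp [coe_T_zpow]

/-- For `x ≠ 0`, if the equation `M x = y` has a solution `M ∈ SL(2,ℤ)`, then the set of
all solutions is exactly `{ B * T^t * C : t ∈ ℤ }` for some `B, C ∈ SL(2,ℤ)`,
where `T = !![1,1; 0,1]`. -/
theorem solutions_eq_BTtC (x1 x2 y1 y2 : ℤ) (hx : ¬(x1 = 0 ∧ x2 = 0))
    (hsol : ∃ M : SL(2, ℤ), (M : Matrix (Fin 2) (Fin 2) ℤ).mulVec ![x1, x2] = ![y1, y2]) :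
    ∃ B C : SL(2, ℤ),
      {M : SL(2, ℤ) | (M : Matrix (Fin 2) (Fin 2) ℤ).mulVec ![x1, x2] = ![y1, y2]} =
        {M : SL(2, ℤ) | ∃ t : ℤ, M = B * ModularGroup.T ^ t * C} := by
  obtain ⟨M₀, h₀⟩ := hsol
  obtain ⟨A, hA⟩ := Int.exists_SL2_smul_eq_gcd x1 x2
  have hg : ((x1.gcd x2 : ℕ) : ℤ) ≠ 0 := by simpa [Int.gcd_eq_zero_iff] using hx
  refine ⟨M₀ * A⁻¹, A, MulAction.setOf_smul_eq_eq_of_stabilizer_eq_zpowers h₀ ?_⟩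
  rw [hA]
  exact ModularGroup.stabilizer_vecCons_zero hg
end

section
/- Let x and y be rational numbers and let F(x,y) = { M ∈ SL(2,Z) : f_M(x) = y }, where for M with entries a,b,c,d the condition f_M(x) = y means c·x + d ≠ 0 and (a·x + b)/(c·x + d) = y. Then F(x,y) = F1 ∪ F2, where each Fi is either empty or of the form { B_i·T^{t}·C_i : t ∈ Z } for some matrices B_i, C_i in SL(2,Z), where T is the matrix with rows (1,1) and (0,1). -/
/-!
Write `x = p/q` and `y = r/s` in lowest terms. Since an `SL(2,ℤ)` matrix maps primitive vectors to
primitive vectors, `f_M(x) = y` holds exactly when `M (p, q) = ± (r, s)`. Choosing `A, B ∈ SL(2,ℤ)`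
with first columns `(p, q)` and `(r, s)`, this says `B⁻¹ M A` or `(-B)⁻¹ M A` fixes `e₁`, and the
stabiliser of `e₁` in `SL(2,ℤ)` is `{T^t : t ∈ ℤ}`.
-/

open Matrix MatrixGroups

/-- The fractional linear transformation condition `f_M(x) = y` for `M = !![a,b; c,d]`:
`c·x + d ≠ 0` and `(a·x + b)/(c·x + d) = y`. -/
def FltMaps (M : Matrix (Fin 2) (Fin 2) ℤ) (x y : ℚ) : Prop :=
  (M 1 0 : ℚ) * x + (M 1 1 : ℚ) ≠ 0 ∧
    ((M 0 0 : ℚ) * x + (M 0 1 : ℚ)) / ((M 1 0 : ℚ) * x + (M 1 1 : ℚ)) = y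

namespace Matrix.SpecialLinearGroup

lemma isCoprime_mulVec {R : Type*} [CommRing R] (M : SL(2, R))
    {v : Fin 2 → R} (hv : IsCoprime (v 0) (v 1)) :
    IsCoprime (((M : Matrix (Fin 2) (Fin 2) R) *ᵥ v) 0)
      (((M : Matrix (Fin 2) (Fin 2) R) *ᵥ v) 1) := by
  obtain ⟨α, β, h⟩ := hv
  have hdet : M 0 0 * M 1 1 - M 0 1 * M 1 0 = 1 := by
    rw [← det_fin_two]; exact M.det_coe
  refine ⟨α * M 1 1 - β * M 1 0, β * M 0 0 - α * M 0 1, ?_⟩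
  simp only [mulVec, dotProduct, Fin.sum_univ_two]
  linear_combination (α * v 0 + β * v 1) * hdet + h

lemma exists_mulVec_single_zero_eq {R : Type*} [CommRing R]
    {v : Fin 2 → R} (hv : IsCoprime (v 0) (v 1)) :
    ∃ A : SL(2, R), (A : Matrix (Fin 2) (Fin 2) R) *ᵥ Pi.single 0 1 = v := by
  obtain ⟨u, w, h⟩ := hv
  refine ⟨⟨!![v 0, -w; v 1, u], by rw [det_fin_two_of]; linear_combination h⟩, ?_⟩
  ext i; fin_cases i <;> simp

end Matrix.SpecialLinearGroup

namespace ModularGroup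

lemma mulVec_single_zero_eq_self_iff (N : SL(2, ℤ)) :
    (N : Matrix (Fin 2) (Fin 2) ℤ) *ᵥ Pi.single 0 1 = Pi.single 0 1 ↔ ∃ t : ℤ, N = T ^ t := by
  constructor
  · intro h
    have h00 : N 0 0 = 1 := by simpa using congrFun h 0
    have h10 : N 1 0 = 0 := by simpa using congrFun h 1
    have h11 : N 1 1 = 1 := by
      have := N.det_coe
      rw [det_fin_two, h00, h10] at this
      linarith
    refine ⟨N 0 1, Subtype.ext ?_⟩
    ext i j; fin_cases i <;> fin_cases j <;> simp [coe_T_zpow, h00, h10, h11]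
  · rintro ⟨t, rfl⟩
    ext i; fin_cases i <;> simp [coe_T_zpow]

lemma mulVec_eq_iff_exists_eq_mul_T_zpow_mul_inv (M A B : SL(2, ℤ)) :
    (M : Matrix (Fin 2) (Fin 2) ℤ) *ᵥ ((A : Matrix (Fin 2) (Fin 2) ℤ) *ᵥ Pi.single 0 1) =
      (B : Matrix (Fin 2) (Fin 2) ℤ) *ᵥ Pi.single 0 1 ↔ ∃ t : ℤ, M = B * T ^ t * A⁻¹ := by
  have hconj : ∀ t : ℤ, M = B * T ^ t * A⁻¹ ↔ B⁻¹ * M * A = T ^ t := fun t => by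
    rw [eq_mul_inv_iff_mul_eq, mul_assoc, inv_mul_eq_iff_eq_mul, eq_comm]
  rw [exists_congr hconj, ← mulVec_single_zero_eq_self_iff]
  simp only [Matrix.SpecialLinearGroup.coe_mul, ← mulVec_mulVec]
  generalize (M : Matrix (Fin 2) (Fin 2) ℤ) *ᵥ ((A : Matrix (Fin 2) (Fin 2) ℤ) *ᵥ Pi.single 0 1) = v
  constructor
  · rintro rfl
    rw [mulVec_mulVec, ← Matrix.SpecialLinearGroup.coe_mul, inv_mul_cancel,
      Matrix.SpecialLinearGroup.coe_one, one_mulVec]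
  · intro h
    rw [← h, mulVec_mulVec, ← Matrix.SpecialLinearGroup.coe_mul, mul_inv_cancel,
      Matrix.SpecialLinearGroup.coe_one, one_mulVec]

end ModularGroup

lemma Rat.intCast_div_eq_iff {u v : ℤ} (huv : IsCoprime u v) (hv : v ≠ 0) (y : ℚ) :
    (u / v : ℚ) = y ↔ (u = y.num ∧ v = y.den) ∨ (u = -y.num ∧ v = -y.den) := by
  have key : ∀ {u v : ℤ}, IsCoprime u v → 0 < v → (u / v : ℚ) = y → u = y.num ∧ v = y.den :=
    fun {u v} huv hv h => by
      rw [Int.isCoprime_iff_gcd_eq_one, Int.gcd_eq_natAbs] at huv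
      exact ⟨h ▸ (Rat.num_div_eq_of_coprime hv huv).symm,
        h ▸ (Rat.den_div_eq_of_coprime hv huv).symm⟩
  constructor
  · intro h
    rcases hv.lt_or_gt with hneg | hpos
    · right
      have := key huv.neg_neg (neg_pos.mpr hneg) (by push_cast; rwa [neg_div_neg_eq])
      constructor <;> linarith [this.1, this.2]
    · exact Or.inl (key huv hpos h)
  · rintro (⟨rfl, rfl⟩ | ⟨rfl, rfl⟩)
    · exact_mod_cast Rat.num_div_den y
    · push_cast; rw [neg_div_neg_eq]; exact_mod_cast Rat.num_div_den y

def numDen (x : ℚ) : Fin 2 → ℤ := ![x.num, x.den]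

@[simp] lemma numDen_zero (x : ℚ) : numDen x 0 = x.num := rfl

@[simp] lemma numDen_one (x : ℚ) : numDen x 1 = x.den := rfl

lemma isCoprime_numDen (x : ℚ) : IsCoprime (numDen x 0) (numDen x 1) :=
  Int.isCoprime_iff_gcd_eq_one.mpr x.reduced

lemma fltMaps_iff_div (M : Matrix (Fin 2) (Fin 2) ℤ) (x y : ℚ) :
    FltMaps M x y ↔ (M *ᵥ numDen x) 1 ≠ 0 ∧ ((M *ᵥ numDen x) 0 / (M *ᵥ numDen x) 1 : ℚ) = y := by
  have hden : (x.den : ℚ) ≠ 0 := by positivity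
  have hrow : ∀ i, (M i 0 : ℚ) * x + M i 1 = ((M *ᵥ numDen x) i : ℚ) / x.den := fun i => by
    rw [eq_div_iff hden, add_mul, mul_assoc, Rat.mul_den_eq_num]
    simp [mulVec, dotProduct, Fin.sum_univ_two, numDen]
  rw [FltMaps, hrow, hrow, div_div_div_cancel_right₀ hden, div_ne_zero_iff, Int.cast_ne_zero]
  simp [hden]

lemma fltMaps_iff (M : SL(2, ℤ)) (x y : ℚ) :
    FltMaps M x y ↔ (M : Matrix (Fin 2) (Fin 2) ℤ) *ᵥ numDen x = numDen y ∨
      (M : Matrix (Fin 2) (Fin 2) ℤ) *ᵥ numDen x = -numDen y := by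
  have hcop := Matrix.SpecialLinearGroup.isCoprime_mulVec M (isCoprime_numDen x)
  simp only [funext_iff, Fin.forall_fin_two, fltMaps_iff_div, Pi.neg_apply, numDen_zero,
    numDen_one]
  constructor
  · rintro ⟨hv, h⟩
    exact (Rat.intCast_div_eq_iff hcop hv y).mp h
  · intro h
    have hv : ((M : Matrix (Fin 2) (Fin 2) ℤ) *ᵥ numDen x) 1 ≠ 0 := by
      rcases h with ⟨-, h⟩ | ⟨-, h⟩ <;> rw [h] <;> simp
    exact ⟨hv, (Rat.intCast_div_eq_iff hcop hv y).mpr h⟩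

/-- The set `F(x,y) = { M ∈ SL(2,ℤ) : f_M(x) = y }` is a union `F1 ∪ F2`, where each `Fi`
is either empty or of the form `{ B_i * T^t * C_i : t ∈ ℤ }` with `B_i, C_i ∈ SL(2,ℤ)`,
where `T = !![1,1; 0,1]`. -/
theorem flt_solution_set_union (x y : ℚ) :
    ∃ F1 F2 : Set SL(2, ℤ),
      {M : SL(2, ℤ) | FltMaps (M : Matrix (Fin 2) (Fin 2) ℤ) x y} = F1 ∪ F2 ∧
      (F1 = ∅ ∨ ∃ B C : SL(2, ℤ),
        F1 = {M : SL(2, ℤ) | ∃ t : ℤ, M = B * ModularGroup.T ^ t * C}) ∧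
      (F2 = ∅ ∨ ∃ B C : SL(2, ℤ),
        F2 = {M : SL(2, ℤ) | ∃ t : ℤ, M = B * ModularGroup.T ^ t * C}) := by
  obtain ⟨A, hA⟩ := Matrix.SpecialLinearGroup.exists_mulVec_single_zero_eq (isCoprime_numDen x)
  obtain ⟨B, hB⟩ := Matrix.SpecialLinearGroup.exists_mulVec_single_zero_eq (isCoprime_numDen y)
  have hB' : ((-B : SL(2, ℤ)) : Matrix (Fin 2) (Fin 2) ℤ) *ᵥ Pi.single 0 1 = -numDen y := by
    rw [Matrix.SpecialLinearGroup.coe_neg, neg_mulVec, hB]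
  refine ⟨{M | ∃ t : ℤ, M = B * ModularGroup.T ^ t * A⁻¹},
    {M | ∃ t : ℤ, M = -B * ModularGroup.T ^ t * A⁻¹}, ?_,
    Or.inr ⟨_, _, rfl⟩, Or.inr ⟨_, _, rfl⟩⟩
  ext M
  rw [Set.mem_union, Set.mem_ofPred_eq, Set.mem_ofPred_eq, Set.mem_ofPred_eq, fltMaps_iff, ← hB',
    ← hA, ← hB, ModularGroup.mulVec_eq_iff_exists_eq_mul_T_zpow_mul_inv,
    ModularGroup.mulVec_eq_iff_exists_eq_mul_T_zpow_mul_inv]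
end

section
/- Let x = (x1, x2) and y = (y1, y2) be vectors in Z × Z, let B and C be matrices in SL(2,Z), and let k be a nonzero integer such that B·T^{k t}·C·x = y for every t ∈ Z, where T is the matrix with rows (1,1) and (0,1). Then the vectors u = C·x and v = B^{-1}·y satisfy u = v = (d, 0) for some integer d with |d| = gcd(x1, x2) = gcd(y1, y2). -/
/-!
Since `B` acts injectively, comparing `t = 0` with `t = 1` shows that `T^k` fixes `u = C x`;
as `T^k (a, b) = (a + k b, b)` with `k ≠ 0`, this forces `u = (d, 0)`, and then `B⁻¹ y = u` as
well. Finally `SL(2, ℤ)` preserves the gcd of the coordinates, so `|d| = gcd x = gcd y`.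
-/

open Matrix MatrixGroups

lemma Int.gcd_dvd_gcd_mulVec (A : Matrix (Fin 2) (Fin 2) ℤ) (v : Fin 2 → ℤ) :
    Int.gcd (v 0) (v 1) ∣ Int.gcd ((A *ᵥ v) 0) ((A *ᵥ v) 1) := by
  have hdvd (i : Fin 2) : (Int.gcd (v 0) (v 1) : ℤ) ∣ (A *ᵥ v) i := by
    simp only [mulVec, dotProduct, Fin.sum_univ_two]
    exact dvd_add ((Int.gcd_dvd_left _ _).mul_left _) ((Int.gcd_dvd_right _ _).mul_left _)
  exact Int.natCast_dvd_natCast.mp (Int.dvd_coe_gcd (hdvd 0) (hdvd 1))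

lemma Int.gcd_SL2_smul (A : SL(2, ℤ)) (v : Fin 2 → ℤ) :
    Int.gcd ((A • v) 0) ((A • v) 1) = Int.gcd (v 0) (v 1) := by
  refine Nat.dvd_antisymm ?_ (Int.gcd_dvd_gcd_mulVec A v)
  have h := Int.gcd_dvd_gcd_mulVec (A⁻¹ : SL(2, ℤ)) (A • v)
  rwa [← smul_eq_mulVec, ← Matrix.SpecialLinearGroup.smul_def, inv_smul_smul] at h

lemma ModularGroup.T_zpow_smul (k : ℤ) (u : Fin 2 → ℤ) :
    T ^ k • u = ![u 0 + k * u 1, u 1] := by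
  rw [Matrix.SpecialLinearGroup.smul_def, coe_T_zpow]
  ext i
  fin_cases i <;> simp [mulVec, dotProduct]

lemma ModularGroup.T_zpow_smul_eq_self_iff {k : ℤ} (hk : k ≠ 0) {u : Fin 2 → ℤ} :
    T ^ k • u = u ↔ u 1 = 0 := by
  rw [T_zpow_smul, ← List.ofFn_inj]
  simp [hk]

/-- If `B * T^(k t) * C` maps `x = (x1,x2)` to `y = (y1,y2)` for every `t ∈ ℤ` (with `k ≠ 0`),
then `u = C x` and `v = B⁻¹ y` satisfy `u = v = (d, 0)` for some integer `d` with
`|d| = gcd (x1, x2) = gcd (y1, y2)`. -/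
theorem reachability_via_d0 (x1 x2 y1 y2 : ℤ) (B C : SL(2, ℤ)) (k : ℤ) (hk : k ≠ 0)
    (h : ∀ t : ℤ,
      ((B * ModularGroup.T ^ (k * t) * C : SL(2, ℤ)) :
        Matrix (Fin 2) (Fin 2) ℤ).mulVec ![x1, x2] = ![y1, y2]) :
    ∃ d : ℤ,
      (C : Matrix (Fin 2) (Fin 2) ℤ).mulVec ![x1, x2] = ![d, 0] ∧
      ((B⁻¹ : SL(2, ℤ)) : Matrix (Fin 2) (Fin 2) ℤ).mulVec ![y1, y2] = ![d, 0] ∧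
      d.natAbs = Int.gcd x1 x2 ∧ d.natAbs = Int.gcd y1 y2 := by
  set u := C • ![x1, x2] with hu_def
  have h_smul (t : ℤ) : B • ModularGroup.T ^ (k * t) • u = ![y1, y2] := by
    rw [hu_def, ← mul_smul, ← mul_smul]
    exact h t
  have hBu : B • u = ![y1, y2] := by simpa using h_smul 0
  have hu1 : u 1 = 0 := by
    refine (ModularGroup.T_zpow_smul_eq_self_iff hk).mp (smul_left_cancel B ?_)
    simpa [hBu] using h_smul 1
  have hu : u = ![u 0, 0] := by
    ext i
    fin_cases i <;> simp [hu1]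
  have hv : B⁻¹ • ![y1, y2] = u := inv_smul_eq_iff.mpr hBu.symm
  refine ⟨u 0, hu, hv.trans hu, ?_, ?_⟩
  · have hx := Int.gcd_SL2_smul C ![x1, x2]
    rw [← hu_def, hu1] at hx
    simpa using hx
  · simpa [hBu, hu1] using (Int.gcd_SL2_smul B u).symm
end

section
/- Let x = (x1, x2) be a vector in Z × Z with gcd(x1, x2) = 1, and let a be an integer. Let F be the set of matrices M in SL(2,Z) such that the row vector (a, 1) times M times the column vector (x1, x2) equals 1. If F is nonempty, then there exist matrices A, D, C in SL(2,Z) and an integer k such that F = { A·T^{k s}·D·T^{t}·C : s ∈ Z, t ∈ Z }, where T is the matrix with rows (1,1) and (0,1). -/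
/-!
Choose `g, h ∈ SL(2,ℤ)` whose bottom row is `z = (a, 1)` and whose left column is the primitive
vector `x`. Then `z M x` is the lower-left entry of `g M h`, and the matrices of `SL(2,ℤ)` with
lower-left entry `1` are exactly the products `T^s S T^t`. Hence the solution set is
`g⁻¹ T^s S T^t h⁻¹`, which is the claimed form with `k = 1` and `D = S`.
-/

open Matrix MatrixGroups ModularGroup

lemma IsCoprime.exists_SL2_dotProduct_mulVec_eq {R : Type*} [CommRing R] {z x : Fin 2 → R}
    (hz : IsCoprime (z 0) (z 1)) (hx : IsCoprime (x 0) (x 1)) :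
    ∃ g h : SL(2, R), ∀ M : Matrix (Fin 2) (Fin 2) R,
      z ⬝ᵥ (M *ᵥ x) = ((g : Matrix (Fin 2) (Fin 2) R) * M * h) 1 0 := by
  obtain ⟨g, hg0, hg1⟩ := hz.exists_SL2_row 1
  obtain ⟨h, hh0, hh1⟩ := hx.exists_SL2_col 0
  refine ⟨g, h, fun M => ?_⟩
  simp only [dotProduct, mulVec, mul_apply, Fin.sum_univ_two, hg0, hg1, hh0, hh1]
  ring

lemma ModularGroup.exists_eq_T_zpow_mul_S_mul_T_zpow_iff (g : SL(2, ℤ)) :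
    (∃ s t : ℤ, g = T ^ s * S * T ^ t) ↔ g 1 0 = 1 := by
  constructor
  · rintro ⟨s, t, rfl⟩
    simp [coe_T_zpow, coe_S, mul_apply, Fin.sum_univ_two]
  · exact fun hc => ⟨_, _, g_eq_of_c_eq_one hc⟩

theorem ModularGroup.setOf_dotProduct_mulVec_eq_one {z x : Fin 2 → ℤ}
    (hz : IsCoprime (z 0) (z 1)) (hx : IsCoprime (x 0) (x 1)) :
    ∃ A C : SL(2, ℤ), {M : SL(2, ℤ) | z ⬝ᵥ ((M : Matrix (Fin 2) (Fin 2) ℤ) *ᵥ x) = 1} =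
      {M : SL(2, ℤ) | ∃ s t : ℤ, M = A * T ^ s * S * T ^ t * C} := by
  obtain ⟨g, h, hgh⟩ := hz.exists_SL2_dotProduct_mulVec_eq hx
  refine ⟨g⁻¹, h⁻¹, Set.ext fun M => ?_⟩
  have hM : M = g⁻¹ * (g * M * h) * h⁻¹ := by group
  have hc : z ⬝ᵥ ((M : Matrix (Fin 2) (Fin 2) ℤ) *ᵥ x) = (g * M * h) 1 0 := hgh M
  simp only [Set.mem_ofPred_eq, hc, ← exists_eq_T_zpow_mul_S_mul_T_zpow_iff]
  refine exists₂_congr fun s t => ⟨fun hst => ?_, fun hst => ?_⟩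
  · rw [hM, hst]
    group
  · rw [hst]
    group

theorem scalar_reachability_solution_set_general (a x1 x2 : ℤ) (hx : Int.gcd x1 x2 = 1) :
    ∃ (A D C : SL(2, ℤ)) (k : ℤ),
      {M : SL(2, ℤ) |
        dotProduct ![a, 1] ((M : Matrix (Fin 2) (Fin 2) ℤ).mulVec ![x1, x2]) = 1} =
      {M : SL(2, ℤ) | ∃ s t : ℤ,
        M = A * ModularGroup.T ^ (k * s) * D * ModularGroup.T ^ t * C} := by
  obtain ⟨A, C, hF⟩ := setOf_dotProduct_mulVec_eq_one (z := ![a, 1]) (x := ![x1, x2])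
    (isCoprime_one_right (x := a)) (Int.isCoprime_iff_gcd_eq_one.mpr hx)
  exact ⟨A, S, C, 1, by simpa only [one_mul, mul_assoc] using hF⟩

/-- Let `gcd (x1, x2) = 1` and let `F` be the set of `M ∈ SL(2,ℤ)` with
`(a, 1) · M · (x1, x2)ᵀ = 1`. If `F` is nonempty, then there are `A, D, C ∈ SL(2,ℤ)` and an
integer `k` such that `F = { A * T^(k s) * D * T^t * C : s, t ∈ ℤ }`,
where `T = !![1,1; 0,1]`. -/
theorem scalar_reachability_solution_set (a x1 x2 : ℤ) (hx : Int.gcd x1 x2 = 1)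
    (hne : {M : SL(2, ℤ) |
      dotProduct ![a, 1] ((M : Matrix (Fin 2) (Fin 2) ℤ).mulVec ![x1, x2]) = 1}.Nonempty) :
    ∃ (A D C : SL(2, ℤ)) (k : ℤ),
      {M : SL(2, ℤ) |
        dotProduct ![a, 1] ((M : Matrix (Fin 2) (Fin 2) ℤ).mulVec ![x1, x2]) = 1} =
      {M : SL(2, ℤ) | ∃ s t : ℤ,
        M = A * ModularGroup.T ^ (k * s) * D * ModularGroup.T ^ t * C} :=
  scalar_reachability_solution_set_general a x1 x2 hx
end
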